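/- Let A be a self-adjoint operator with operator norm ‖A‖ ≤ 2^{-3/2}, and set Γ := √(1+A) − 1. Then 0 ≤ Γ² ≤ A²/2 in the Loewner order. -/

import Mathlib

/-!
Everything is a function of the self-adjoint `A`: `√(1 + A) - 1 = f(A)` with `f x = √(1 + x) - 1`,
so by monotonicity of the continuous functional calculus it suffices to prove `f(x)² ≤ x²/2` on the
spectrum of `A`, which lies in `[-‖A‖, ‖A‖]`. Writing `s = √(1 + x)` we have `x = (s - 1)(s + 1)`,
so the scalar inequality amounts to `(s + 1)² ≥ 2`, i.e. `x ≥ 2 - 2√2`, well below `-2^{-3/2}`.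
-/

open Matrix
open scoped Matrix.Norms.L2Operator ComplexOrder

noncomputable def Matrix.PosSemidef.sqrt {𝕜 : Type*} [RCLike 𝕜] {n : Type*} [Fintype n]
    [DecidableEq n] {A : Matrix n n 𝕜} (hA : A.PosSemidef) : Matrix n n 𝕜 :=
  hA.1.eigenvectorUnitary.1 * diagonal ((↑) ∘ (Real.sqrt ∘ hA.1.eigenvalues)) *
  (star hA.1.eigenvectorUnitary : Matrix n n 𝕜)

theorem Real.sq_sqrt_one_add_sub_one_le {x : ℝ} (hx : 2 - 2 * √2 ≤ x) :
    (√(1 + x) - 1) ^ 2 ≤ x ^ 2 / 2 := by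
  have hsqrt_two_sq : √2 ^ 2 = 2 := Real.sq_sqrt zero_le_two
  have hsq_le : (√2 - 1) ^ 2 ≤ 1 + x := by nlinarith
  set s := √(1 + x)
  have hs : s ^ 2 = 1 + x := Real.sq_sqrt ((sq_nonneg _).trans hsq_le)
  have hs_ge : √2 - 1 ≤ s := (le_abs_self _).trans (Real.abs_le_sqrt hsq_le)
  have hs_add_one_sq : 2 ≤ (s + 1) ^ 2 := by nlinarith [Real.sqrt_nonneg 2]
  calc (s - 1) ^ 2 ≤ (s - 1) ^ 2 * (s + 1) ^ 2 / 2 := by nlinarith [sq_nonneg (s - 1)]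
    _ = x ^ 2 / 2 := by linear_combination (s ^ 2 - 1 + x) / 2 * hs

section CStarAlgebra

variable {A : Type*} [CStarAlgebra A]

lemma spectrum.abs_le_norm_of_mem {a : A} {x : ℝ} (hx : x ∈ spectrum ℝ a) : |x| ≤ ‖a‖ := by
  rcases subsingleton_or_nontrivial A with _ | _
  · simp [spectrum.of_subsingleton] at hx
  · exact spectrum.norm_le_norm_of_mem hx

variable [PartialOrder A] [StarOrderedRing A] {a : A}

lemma CFC.sqrt_one_add_eq_cfc (ha : IsSelfAdjoint a) (h : ∀ x ∈ spectrum ℝ a, -1 ≤ x) :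
    CFC.sqrt (1 + a) = cfc (fun x => √(1 + x)) a := by
  refine CFC.sqrt_unique ?_ (cfc_nonneg fun x _ => Real.sqrt_nonneg (1 + x))
  rw [← cfc_mul .., cfc_congr (g := fun x => 1 + x) fun x hx => Real.mul_self_sqrt (by linarith [h x hx]),
    cfc_const_add 1 (fun x => x) a, cfc_id' ℝ a, map_one]

theorem CFC.sq_sqrt_one_add_sub_one_le (ha : IsSelfAdjoint a)
    (h : ∀ x ∈ spectrum ℝ a, 2 - 2 * √2 ≤ x) :
    (CFC.sqrt (1 + a) - 1) ^ 2 ≤ (2⁻¹ : ℝ) • a ^ 2 := by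
  have hsqrt_two : √2 ≤ 3 / 2 := Real.sqrt_le_iff.mpr ⟨by norm_num, by norm_num⟩
  have h_one : ∀ x ∈ spectrum ℝ a, -1 ≤ x := fun x hx => by linarith [h x hx]
  calc (CFC.sqrt (1 + a) - 1) ^ 2 = cfc (fun x => (√(1 + x) - 1) ^ 2) a := by
        rw [CFC.sqrt_one_add_eq_cfc ha h_one, cfc_pow .., cfc_sub .., cfc_const_one ℝ a]
    _ ≤ cfc (fun x => (2⁻¹ : ℝ) * x ^ 2) a := cfc_mono fun x hx => by
        simpa only [div_eq_inv_mul] using Real.sq_sqrt_one_add_sub_one_le (h x hx)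
    _ = (2⁻¹ : ℝ) • a ^ 2 := by rw [cfc_const_mul .., cfc_pow_id a 2]

end CStarAlgebra

open scoped MatrixOrder

lemma Matrix.PosSemidef.sqrt_eq_cfcSqrt {𝕜 : Type*} [RCLike 𝕜] {n : Type*} [Fintype n]
    [DecidableEq n] {A : Matrix n n 𝕜} (hA : A.PosSemidef) : hA.sqrt = CFC.sqrt A := by
  rw [CFC.sqrt_eq_real_sqrt A hA.nonneg, cfcₙ_eq_cfc (hf0 := Real.sqrt_zero), hA.1.cfc_eq]
  simp [IsHermitian.cfc, Matrix.PosSemidef.sqrt]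

/-- If `A` is self-adjoint with operator norm `‖A‖ ≤ 2^{-3/2}` (so `1 + A ≥ 0`) and
`Γ := √(1+A) − 1`, then `0 ≤ Γ² ≤ A²/2` in the Loewner order. -/
theorem sq_sqrt_sub_one_le {n : Type*} [Fintype n] [DecidableEq n]
    (A : Matrix n n ℂ) (hA : A.IsHermitian) (hnorm : ‖A‖ ≤ (2 : ℝ) ^ (-(3 : ℝ) / 2))
    (h1 : (1 + A).PosSemidef) :
    ((h1.sqrt - 1) * (h1.sqrt - 1)).PosSemidef ∧
    ((1 / 2 : ℂ) • (A * A) - (h1.sqrt - 1) * (h1.sqrt - 1)).PosSemidef := by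
  have hnorm_half : ‖A‖ ≤ 2⁻¹ := by
    refine hnorm.trans ?_
    rw [← Real.rpow_neg_one]
    exact Real.rpow_le_rpow_of_exponent_le one_le_two (by norm_num)
  have hspec : ∀ x ∈ spectrum ℝ A, 2 - 2 * √2 ≤ x := fun x hx => by
    have : (5 / 4 : ℝ) ≤ √2 := Real.le_sqrt_of_sq_le (by norm_num)
    linarith [neg_abs_le x, spectrum.abs_le_norm_of_mem hx]
  have hΓ : IsSelfAdjoint (h1.sqrt - 1) := by
    rw [h1.sqrt_eq_cfcSqrt]
    exact (CFC.sqrt_nonneg _).isSelfAdjoint.sub (IsSelfAdjoint.one _)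
  refine ⟨hΓ.mul_self_nonneg.posSemidef, Matrix.le_iff.mp ?_⟩
  rw [← sq, h1.sqrt_eq_cfcSqrt, ← sq, one_div, ← Complex.ofReal_ofNat, ← Complex.ofReal_inv,
    Complex.coe_smul]
  exact CFC.sq_sqrt_one_add_sub_one_le hA hspec
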